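/- Let T be a real m×n matrix, K a real p×n matrix, let (A_i, B_i) for i = 1,…,n_p be pairs of real n×n and n×p matrices, let w_l ∈ ℝⁿ for l = 1,…,n_w, let ẑ ∈ ℝⁿ and α ∈ ℝ. Suppose for each i there exists a nonnegative real m×m matrix P_i with P_i T = T (A_i + B_i K), and that for all i and l one has P_i (T ẑ + α𝟏) + T w_l ≤ T ẑ + α𝟏. Then the set Z_f := {z ∈ ℝⁿ : T (z − ẑ) ≤ α𝟏} is robust positively invariant: for every z ∈ Z_f, every (A, B) in the convex hull of {(A_1,B_1),…,(A_{n_p},B_{n_p})}, and every w in the convex hull of {w_1,…,w_{n_w}}, one has (A + B K) z + w ∈ Z_f. -/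

import Mathlib

/-! Write `S = {z | T (z - ẑ) ≤ α𝟏}`. At a vertex `(A_i, B_i, w_l)`, the certificate gives
`T ((A_i + B_i K) z + w_l) = P_i (T z) + T w_l`, and since `P_i ≥ 0` and `T z ≤ T ẑ + α𝟏` this is at
most `P_i (T ẑ + α𝟏) + T w_l ≤ T ẑ + α𝟏`. For fixed `z` the closed-loop successor
`(A + B K) z + w` depends linearly on `((A, B), w)`, so the parameters sending `z` into the
convex set `S` form a convex set; it contains all vertex pairs, hence the product of the two convex
hulls, which is the convex hull of the product. -/

open Matrix Set

lemma Matrix.mulVec_mono_of_nonneg {R μ κ : Type*} [Semiring R] [PartialOrder R] [IsOrderedRing R]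
    [Fintype κ] {Q : Matrix μ κ R} (hQ : ∀ r s, 0 ≤ Q r s) {u v : κ → R} (h : u ≤ v) :
    Q *ᵥ u ≤ Q *ᵥ v :=
  fun r => dotProduct_le_dotProduct_of_nonneg_left h (hQ r)

section Tube

variable {R ι κ π : Type*} [CommRing R] [Fintype ι]

section OrderedRing

variable [PartialOrder R] [IsOrderedRing R]

lemma convex_setOf_mulVec_sub_le (T : Matrix κ ι R) (zhat : ι → R) (c : κ → R) :
    Convex R {z | T *ᵥ (z - zhat) ≤ c} := by
  have hpreimage : {z | T *ᵥ (z - zhat) ≤ c} = mulVecLin T ⁻¹' Iic (T *ᵥ zhat + c) := by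
    ext z
    simp only [mem_ofPred_eq, mem_preimage, mem_Iic, mulVecLin_apply, mulVec_sub,
      sub_le_iff_le_add']
  rw [hpreimage]
  exact (convex_Iic _).linear_preimage _

lemma mulVec_add_sub_le_of_nonneg_certificate [Fintype κ] {T : Matrix κ ι R}
    {P : Matrix κ κ R} {M : Matrix ι ι R} {zhat z v : ι → R} {c : κ → R}
    (hP : ∀ r s, 0 ≤ P r s) (hPT : P * T = T * M)
    (hv : P *ᵥ (T *ᵥ zhat + c) + T *ᵥ v ≤ T *ᵥ zhat + c) (hz : T *ᵥ (z - zhat) ≤ c) :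
    T *ᵥ (M *ᵥ z + v - zhat) ≤ c :=
  calc T *ᵥ (M *ᵥ z + v - zhat) = P *ᵥ (T *ᵥ z) + T *ᵥ v - T *ᵥ zhat := by
        rw [mulVec_sub, mulVec_add, mulVec_mulVec, ← hPT, ← mulVec_mulVec]
    _ ≤ P *ᵥ (T *ᵥ zhat + c) + T *ᵥ v - T *ᵥ zhat := by
        gcongr
        exact mulVec_mono_of_nonneg hP (by rwa [mulVec_sub, sub_le_iff_le_add'] at hz)
    _ ≤ c := by rwa [sub_le_iff_le_add']

end OrderedRing

variable [Fintype π]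

def closedLoopSuccessor (K : Matrix π ι R) (z : ι → R) :
    (Matrix ι ι R × Matrix ι π R) × (ι → R) →ₗ[R] ι → R where
  toFun x := (x.1.1 + x.1.2 * K) *ᵥ z + x.2
  map_add' x y := by
    simp only [Prod.fst_add, Prod.snd_add, Matrix.add_mul, add_mulVec]
    abel
  map_smul' a x := by
    simp only [Prod.smul_fst, Prod.smul_snd, smul_mul, ← smul_add, smul_mulVec, RingHom.id_apply]

lemma closedLoopSuccessor_apply (K : Matrix π ι R) (z : ι → R)
    (x : (Matrix ι ι R × Matrix ι π R) × (ι → R)) :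
    closedLoopSuccessor K z x = (x.1.1 + x.1.2 * K) *ᵥ z + x.2 :=
  rfl

end Tube

/-- Robust positive invariance of the homothetic terminal set defined via Farkas
certificates: if nonnegative matrices `P i` satisfy `P i * T = T (A i + B i K)`
and `P i (T ẑ + α𝟏) + T w l ≤ T ẑ + α𝟏` for all vertices `i`, `l`, then the
homothetic tube `Z_f = {z : T (z - ẑ) ≤ α𝟏}` is robust positively invariant for
the closed loop `z⁺ = (A + B K) z + w` with `(A, B)` in the convex hull of the
vertex matrix pairs and `w` in the convex hull of the disturbance vertices. -/
theorem homothetic_terminal_set_RPI {n m p np nw : ℕ}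
    (T : Matrix (Fin m) (Fin n) ℝ) (K : Matrix (Fin p) (Fin n) ℝ)
    (A : Fin np → Matrix (Fin n) (Fin n) ℝ) (B : Fin np → Matrix (Fin n) (Fin p) ℝ)
    (w : Fin nw → Fin n → ℝ) (zhat : Fin n → ℝ) (α : ℝ)
    (P : Fin np → Matrix (Fin m) (Fin m) ℝ)
    (hPnonneg : ∀ i, ∀ r s, 0 ≤ P i r s)
    (hPeq : ∀ i, P i * T = T * (A i + B i * K))
    (hPineq : ∀ i l, (P i).mulVec (T.mulVec zhat + α • 1) + T.mulVec (w l)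
        ≤ T.mulVec zhat + α • 1) :
    ∀ z ∈ {z : Fin n → ℝ | T.mulVec (z - zhat) ≤ α • 1},
      ∀ AB ∈ convexHull ℝ (Set.range fun i => (A i, B i)),
        ∀ ww ∈ convexHull ℝ (Set.range w),
          (AB.1 + AB.2 * K).mulVec z + ww
            ∈ {z : Fin n → ℝ | T.mulVec (z - zhat) ≤ α • 1} := by
  intro z hz AB hAB ww hww
  let S := {z : Fin n → ℝ | T *ᵥ (z - zhat) ≤ α • 1}
  have hvertices :
      range (fun i => (A i, B i)) ×ˢ range w ⊆ closedLoopSuccessor K z ⁻¹' S := by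
    rintro ⟨_, _⟩ ⟨⟨i, rfl⟩, ⟨l, rfl⟩⟩
    exact mulVec_add_sub_le_of_nonneg_certificate (hPnonneg i) (hPeq i) (hPineq i l) hz
  have hconvex : Convex ℝ (closedLoopSuccessor K z ⁻¹' S) :=
    (convex_setOf_mulVec_sub_le T zhat (α • 1)).linear_preimage _
  have hhull : (AB, ww) ∈ convexHull ℝ (range (fun i => (A i, B i)) ×ˢ range w) := by
    rw [convexHull_prod]
    exact ⟨hAB, hww⟩
  have hsuccessor := convexHull_min hvertices hconvex hhull
  rwa [mem_preimage, closedLoopSuccessor_apply] at hsuccessor
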